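/- There do not exist vectors w_0, …, w_8 ∈ ℝ² and reals h_0, …, h_8 such that (w_0,…,w_8) is an admissible extended-Gale configuration for C_6(9) and the intersection heights satisfy the chain of strict inequalities z_{038} < z_{238} < z_{236} < z_{036} < z_{016} < z_{056} < z_{256} < z_{567} < z_{367} < z_{167} < z_{678} < z_{278} < z_{078} < z_{478} < z_{147} < z_{127} < z_{123} < z_{012} < z_{125} < z_{258} < z_{058} < z_{458} < z_{456} < z_{145} < z_{345} < z_{347} < z_{234} < z_{034} < z_{014} < z_{018}. (This is the nonrealizability of the Hamilton HK AOF orientation NR_4^6 of the graph of C_6(9)^Δ.) -/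
import Mathlib


noncomputable section

/-- For `v = (x, y) ∈ ℝ²`, `u · v^⊥ = det(u, v)` where `v^⊥ = (y, -x)`. -/
def dperp (u v : ℝ × ℝ) : ℝ := u.1 * v.2 - u.2 * v.1

/-- `[p q r]`: the determinant of the 3×3 matrix with columns `(pₓ,p_y,1)`, `(qₓ,q_y,1)`,
`(rₓ,r_y,1)`. -/
def tdet (p q r : ℝ × ℝ) : ℝ :=
  p.1 * (q.2 - r.2) - q.1 * (p.2 - r.2) + r.1 * (p.2 - q.2)

/-- The intersection height
`z(u,h_u; v,h_v; w,h_w) = ((u·v^⊥)·h_w + (w·u^⊥)·h_v + (v·w^⊥)·h_u) / [u v w]`. -/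
def iheight (u v w : ℝ × ℝ) (hu hv hw : ℝ) : ℝ :=
  (dperp u v * hw + dperp w u * hv + dperp v w * hu) / tdet u v w

/-- The 30 vertex triples of `C₆(9)^Δ`: complements in `{0,…,8}` of the facets of the
cyclic polytope `C₆(9)` given by Gale's evenness criterion. -/
def C69triples : Set (Fin 9 × Fin 9 × Fin 9) :=
  {(0, 1, 2), (0, 1, 4), (0, 1, 6), (0, 1, 8), (0, 3, 4), (0, 3, 6), (0, 3, 8), (0, 5, 6), (0, 5, 8), (0, 7, 8), (1, 2, 3), (1, 2, 5), (1, 2, 7), (1, 4, 5), (1, 4, 7), (1, 6, 7), (2, 3, 4), (2, 3, 6), (2, 3, 8), (2, 5, 6), (2, 5, 8), (2, 7, 8), (3, 4, 5), (3, 4, 7), (3, 6, 7), (4, 5, 6), (4, 5, 8), (4, 7, 8), (5, 6, 7), (6, 7, 8)}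

/-- `(w₀, …, w₈)` is an admissible extended-Gale configuration for `C₆(9)`: the `w_a` are
positive multiples of unit vectors in clockwise radial order `0, 2, 4, 6, 8, 1, 3, 5, 7`
around the origin, a 3-element subset `{i < j < k}` of `{0,…,8}` has `0` in the interior
of `conv {wᵢ, wⱼ, w_k}` iff it is one of the 30 vertex triples, and each vertex triple
has `[wᵢ wⱼ w_k] > 0`. -/
def AdmissibleC69 (w : Fin 9 → ℝ × ℝ) : Prop :=
  (∃ θ r : Fin 9 → ℝ,
    (∀ a : Fin 9, 0 < r a ∧ w a = (r a * Real.cos (θ a), r a * Real.sin (θ a))) ∧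
    θ 0 > θ 2 ∧ θ 2 > θ 4 ∧ θ 4 > θ 6 ∧ θ 6 > θ 8 ∧ θ 8 > θ 1 ∧ θ 1 > θ 3 ∧ θ 3 > θ 5 ∧
    θ 5 > θ 7 ∧ θ 7 > θ 0 - 2 * Real.pi) ∧
  (∀ i j k : Fin 9, i < j → j < k →
    ((0 : ℝ × ℝ) ∈ interior (convexHull ℝ {w i, w j, w k}) ↔ (i, j, k) ∈ C69triples)) ∧
  (∀ i j k : Fin 9, (i, j, k) ∈ C69triples → 0 < tdet (w i) (w j) (w k))

/-- The intersection height `z_{ijk}` determined by the configuration `w` and the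
lifting heights `h`. -/
def zC69 (w : Fin 9 → ℝ × ℝ) (h : Fin 9 → ℝ) (i j k : Fin 9) : ℝ :=
  iheight (w i) (w j) (w k) (h i) (h j) (h k)


lemma pos_of_mul_pos_nonneg {a e : ℝ} (h : 0 < a * e) (ha : 0 ≤ a) : 0 < e := by
  rcases ha.eq_or_lt with h' | h'
  · rw [← h', zero_mul] at h; exact absurd h (lt_irrefl 0)
  · nlinarith [h, h']

/-- Lifted 4×4 determinant used in the certificate. -/
def det4 (p q r s : ℝ × ℝ) (hp hq hr hs : ℝ) : ℝ :=
  -(hp * tdet q r s) + hq * tdet p r s - hr * tdet p q s + hs * tdet p q r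

lemma conv_dperp (a b c : ℝ × ℝ)
    (hm : (0 : ℝ × ℝ) ∈ convexHull ℝ ({a, b, c} : Set (ℝ × ℝ)))
    (ht : 0 < tdet a b c) :
    0 ≤ dperp a b ∧ 0 ≤ dperp b c ∧ 0 ≤ dperp c a := by
  rw [show ({a, b, c} : Set (ℝ × ℝ)) = insert a {b, c} from rfl,
    convexHull_insert ⟨b, Set.mem_insert _ _⟩] at hm
  obtain ⟨x0, hx0, h0⟩ := Set.mem_iUnion₂.mp hm
  obtain ⟨x, hx, hseg⟩ := Set.mem_iUnion₂.mp h0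
  rw [Set.mem_singleton_iff] at hx0
  rw [convexHull_pair] at hx
  obtain ⟨p, q, hp, hq, hpq, hxeq⟩ := hx
  obtain ⟨u, v, hu, hv, huv, h0eq⟩ := hseg
  rw [hx0, ← hxeq] at h0eq
  have e1 : u * a.1 + (v*p) * b.1 + (v*q) * c.1 = 0 := by
    have h1 := congrArg Prod.fst h0eq
    simp only [Prod.fst_add, Prod.smul_fst, smul_eq_mul, Prod.fst_zero] at h1
    linear_combination h1
  have e2 : u * a.2 + (v*p) * b.2 + (v*q) * c.2 = 0 := by
    have h1 := congrArg Prod.snd h0eq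
    simp only [Prod.snd_add, Prod.smul_snd, smul_eq_mul, Prod.snd_zero] at h1
    linear_combination h1
  have hsum : u + (v*p) + (v*q) = 1 := by linear_combination v * hpq + huv
  have k1 : dperp b c = u * tdet a b c := by
    simp only [dperp, tdet]
    linear_combination (c.2 - b.2) * e1 + (b.1 - c.1) * e2 - (b.1 * c.2 - b.2 * c.1) * hsum
  have k2 : dperp c a = (v*p) * tdet a b c := by
    simp only [dperp, tdet]
    linear_combination (a.2 - c.2) * e1 + (c.1 - a.1) * e2 - (c.1 * a.2 - c.2 * a.1) * hsum
  have k3 : dperp a b = (v*q) * tdet a b c := by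
    simp only [dperp, tdet]
    linear_combination (b.2 - a.2) * e1 + (a.1 - b.1) * e2 - (a.1 * b.2 - a.2 * b.1) * hsum
  refine ⟨?_, ?_, ?_⟩
  · rw [k3]; exact mul_nonneg (mul_nonneg hv hq) ht.le
  · rw [k1]; exact mul_nonneg hu ht.le
  · rw [k2]; exact mul_nonneg (mul_nonneg hv hp) ht.le


set_option maxHeartbeats 2000000 in
/-- **Nonrealizability of the Hamilton HK AOF orientation `NR₄⁶` of the graph of
`C₆(9)^Δ`**: no admissible extended-Gale configuration for `C₆(9)` with lifting heights
realizes the vertex ordering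
`038 < 238 < 236 < 036 < 016 < 056 < 256 < 567 < 367 < 167 < 678 < 278 < 078 < 478 < 147 < 127 < 123 < 012 < 125 < 258 < 058 < 458 < 456 < 145 < 345 < 347 < 234 < 034 < 014 < 018`. -/

theorem NR46_not_realizable :
    ¬ ∃ (w : Fin 9 → ℝ × ℝ) (h : Fin 9 → ℝ),
      AdmissibleC69 w ∧
      (zC69 w h 0 3 8 < zC69 w h 2 3 8 ∧
       zC69 w h 2 3 8 < zC69 w h 2 3 6 ∧
       zC69 w h 2 3 6 < zC69 w h 0 3 6 ∧
       zC69 w h 0 3 6 < zC69 w h 0 1 6 ∧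
       zC69 w h 0 1 6 < zC69 w h 0 5 6 ∧
       zC69 w h 0 5 6 < zC69 w h 2 5 6 ∧
       zC69 w h 2 5 6 < zC69 w h 5 6 7 ∧
       zC69 w h 5 6 7 < zC69 w h 3 6 7 ∧
       zC69 w h 3 6 7 < zC69 w h 1 6 7 ∧
       zC69 w h 1 6 7 < zC69 w h 6 7 8 ∧
       zC69 w h 6 7 8 < zC69 w h 2 7 8 ∧
       zC69 w h 2 7 8 < zC69 w h 0 7 8 ∧
       zC69 w h 0 7 8 < zC69 w h 4 7 8 ∧
       zC69 w h 4 7 8 < zC69 w h 1 4 7 ∧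
       zC69 w h 1 4 7 < zC69 w h 1 2 7 ∧
       zC69 w h 1 2 7 < zC69 w h 1 2 3 ∧
       zC69 w h 1 2 3 < zC69 w h 0 1 2 ∧
       zC69 w h 0 1 2 < zC69 w h 1 2 5 ∧
       zC69 w h 1 2 5 < zC69 w h 2 5 8 ∧
       zC69 w h 2 5 8 < zC69 w h 0 5 8 ∧
       zC69 w h 0 5 8 < zC69 w h 4 5 8 ∧
       zC69 w h 4 5 8 < zC69 w h 4 5 6 ∧
       zC69 w h 4 5 6 < zC69 w h 1 4 5 ∧
       zC69 w h 1 4 5 < zC69 w h 3 4 5 ∧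
       zC69 w h 3 4 5 < zC69 w h 3 4 7 ∧
       zC69 w h 3 4 7 < zC69 w h 2 3 4 ∧
       zC69 w h 2 3 4 < zC69 w h 0 3 4 ∧
       zC69 w h 0 3 4 < zC69 w h 0 1 4 ∧
       zC69 w h 0 1 4 < zC69 w h 0 1 8) := by
  rintro ⟨w, h, ⟨⟨-, hiff, hpos⟩, hc⟩⟩
  obtain ⟨z0, z1, z2, z3, z4, z5, z6, z7, z8, z9, z10, z11, z12, z13, z14, z15, z16, z17, z18, z19, z20, z21, z22, z23, z24, z25, z26, z27, z28⟩ := hc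
  -- positivity of the determinants of the 30 vertex triples (selected ones)
  have t012 : 0 < tdet (w 0) (w 1) (w 2) := hpos 0 1 2 (by unfold C69triples; left; rfl)
  have t016 : 0 < tdet (w 0) (w 1) (w 6) := hpos 0 1 6 (by unfold C69triples; right; right; left; rfl)
  have t036 : 0 < tdet (w 0) (w 3) (w 6) := hpos 0 3 6 (by unfold C69triples; right; right; right; right; right; left; rfl)
  have t056 : 0 < tdet (w 0) (w 5) (w 6) := hpos 0 5 6 (by unfold C69triples; right; right; right; right; right; right; right; left; rfl)
  have t058 : 0 < tdet (w 0) (w 5) (w 8) := hpos 0 5 8 (by unfold C69triples; right; right; right; right; right; right; right; right; left; rfl)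
  have t125 : 0 < tdet (w 1) (w 2) (w 5) := hpos 1 2 5 (by unfold C69triples; right; right; right; right; right; right; right; right; right; right; right; left; rfl)
  have t127 : 0 < tdet (w 1) (w 2) (w 7) := hpos 1 2 7 (by unfold C69triples; right; right; right; right; right; right; right; right; right; right; right; right; left; rfl)
  have t167 : 0 < tdet (w 1) (w 6) (w 7) := hpos 1 6 7 (by unfold C69triples; right; right; right; right; right; right; right; right; right; right; right; right; right; right; right; left; rfl)
  have t236 : 0 < tdet (w 2) (w 3) (w 6) := hpos 2 3 6 (by unfold C69triples; right; right; right; right; right; right; right; right; right; right; right; right; right; right; right; right; right; left; rfl)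
  have t238 : 0 < tdet (w 2) (w 3) (w 8) := hpos 2 3 8 (by unfold C69triples; right; right; right; right; right; right; right; right; right; right; right; right; right; right; right; right; right; right; left; rfl)
  have t256 : 0 < tdet (w 2) (w 5) (w 6) := hpos 2 5 6 (by unfold C69triples; right; right; right; right; right; right; right; right; right; right; right; right; right; right; right; right; right; right; right; left; rfl)
  have t258 : 0 < tdet (w 2) (w 5) (w 8) := hpos 2 5 8 (by unfold C69triples; right; right; right; right; right; right; right; right; right; right; right; right; right; right; right; right; right; right; right; right; left; rfl)
  have t278 : 0 < tdet (w 2) (w 7) (w 8) := hpos 2 7 8 (by unfold C69triples; right; right; right; right; right; right; right; right; right; right; right; right; right; right; right; right; right; right; right; right; right; left; rfl)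
  have t367 : 0 < tdet (w 3) (w 6) (w 7) := hpos 3 6 7 (by unfold C69triples; right; right; right; right; right; right; right; right; right; right; right; right; right; right; right; right; right; right; right; right; right; right; right; right; left; rfl)
  have t456 : 0 < tdet (w 4) (w 5) (w 6) := hpos 4 5 6 (by unfold C69triples; right; right; right; right; right; right; right; right; right; right; right; right; right; right; right; right; right; right; right; right; right; right; right; right; right; left; rfl)
  have t458 : 0 < tdet (w 4) (w 5) (w 8) := hpos 4 5 8 (by unfold C69triples; right; right; right; right; right; right; right; right; right; right; right; right; right; right; right; right; right; right; right; right; right; right; right; right; right; right; left; rfl)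
  have t567 : 0 < tdet (w 5) (w 6) (w 7) := hpos 5 6 7 (by unfold C69triples; right; right; right; right; right; right; right; right; right; right; right; right; right; right; right; right; right; right; right; right; right; right; right; right; right; right; right; right; left; rfl)
  have t678 : 0 < tdet (w 6) (w 7) (w 8) := hpos 6 7 8 (by unfold C69triples; right; right; right; right; right; right; right; right; right; right; right; right; right; right; right; right; right; right; right; right; right; right; right; right; right; right; right; right; right; rfl)
  -- nonnegativity of dperp for the shared edges, via origin in the convex hulls
  have memt127 : (0 : ℝ × ℝ) ∈ convexHull ℝ {w 1, w 2, w 7} :=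
    interior_subset ((hiff 1 2 7 (by decide) (by decide)).mpr (by unfold C69triples; right; right; right; right; right; right; right; right; right; right; right; right; left; rfl))
  have dge12 : 0 ≤ dperp (w 1) (w 2) := (conv_dperp _ _ _ memt127 t127).1
  have memt238 : (0 : ℝ × ℝ) ∈ convexHull ℝ {w 2, w 3, w 8} :=
    interior_subset ((hiff 2 3 8 (by decide) (by decide)).mpr (by unfold C69triples; right; right; right; right; right; right; right; right; right; right; right; right; right; right; right; right; right; right; left; rfl))
  have dge23 : 0 ≤ dperp (w 2) (w 3) := (conv_dperp _ _ _ memt238 t238).1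
  have memt258 : (0 : ℝ × ℝ) ∈ convexHull ℝ {w 2, w 5, w 8} :=
    interior_subset ((hiff 2 5 8 (by decide) (by decide)).mpr (by unfold C69triples; right; right; right; right; right; right; right; right; right; right; right; right; right; right; right; right; right; right; right; right; left; rfl))
  have dge25 : 0 ≤ dperp (w 2) (w 5) := (conv_dperp _ _ _ memt258 t258).1
  have memt367 : (0 : ℝ × ℝ) ∈ convexHull ℝ {w 3, w 6, w 7} :=
    interior_subset ((hiff 3 6 7 (by decide) (by decide)).mpr (by unfold C69triples; right; right; right; right; right; right; right; right; right; right; right; right; right; right; right; right; right; right; right; right; right; right; right; right; left; rfl))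
  have dge36 : 0 ≤ dperp (w 3) (w 6) := (conv_dperp _ _ _ memt367 t367).1
  have memt458 : (0 : ℝ × ℝ) ∈ convexHull ℝ {w 4, w 5, w 8} :=
    interior_subset ((hiff 4 5 8 (by decide) (by decide)).mpr (by unfold C69triples; right; right; right; right; right; right; right; right; right; right; right; right; right; right; right; right; right; right; right; right; right; right; right; right; right; right; left; rfl))
  have dge45 : 0 ≤ dperp (w 4) (w 5) := (conv_dperp _ _ _ memt458 t458).1
  have memt567 : (0 : ℝ × ℝ) ∈ convexHull ℝ {w 5, w 6, w 7} :=
    interior_subset ((hiff 5 6 7 (by decide) (by decide)).mpr (by unfold C69triples; right; right; right; right; right; right; right; right; right; right; right; right; right; right; right; right; right; right; right; right; right; right; right; right; right; right; right; right; left; rfl))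
  have dge56 : 0 ≤ dperp (w 5) (w 6) := (conv_dperp _ _ _ memt567 t567).1
  have dge58 : 0 ≤ dperp (w 5) (w 8) := (conv_dperp _ _ _ memt458 t458).2.1
  have memt056 : (0 : ℝ × ℝ) ∈ convexHull ℝ {w 0, w 5, w 6} :=
    interior_subset ((hiff 0 5 6 (by decide) (by decide)).mpr (by unfold C69triples; right; right; right; right; right; right; right; left; rfl))
  have dge60 : 0 ≤ dperp (w 6) (w 0) := (conv_dperp _ _ _ memt056 t056).2.2
  have memt678 : (0 : ℝ × ℝ) ∈ convexHull ℝ {w 6, w 7, w 8} :=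
    interior_subset ((hiff 6 7 8 (by decide) (by decide)).mpr (by unfold C69triples; right; right; right; right; right; right; right; right; right; right; right; right; right; right; right; right; right; right; right; right; right; right; right; right; right; right; right; right; right; rfl))
  have dge67 : 0 ≤ dperp (w 6) (w 7) := (conv_dperp _ _ _ memt678 t678).1
  have dge78 : 0 ≤ dperp (w 7) (w 8) := (conv_dperp _ _ _ memt678 t678).2.1
  -- the 14 needed edge inequalities, converted to 4-point determinant signs
  rw [zC69, zC69, iheight, iheight, div_lt_div_iff₀ t238 t236] at z1
  have key1 : (dperp (w 2) (w 3) * h 6 + dperp (w 6) (w 2) * h 3 + dperp (w 3) (w 6) * h 2) * tdet (w 2) (w 3) (w 8) - (dperp (w 2) (w 3) * h 8 + dperp (w 8) (w 2) * h 3 + dperp (w 3) (w 8) * h 2) * tdet (w 2) (w 3) (w 6) = dperp (w 2) (w 3) * (-(det4 (w 2) (w 3) (w 6) (w 8) (h 2) (h 3) (h 6) (h 8))) := by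
    simp only [dperp, tdet, det4]; ring
  have hp1 : 0 < dperp (w 2) (w 3) * (-(det4 (w 2) (w 3) (w 6) (w 8) (h 2) (h 3) (h 6) (h 8))) := key1 ▸ sub_pos.mpr z1
  have D2368s : det4 (w 2) (w 3) (w 6) (w 8) (h 2) (h 3) (h 6) (h 8) < 0 := neg_pos.mp (pos_of_mul_pos_nonneg hp1 dge23)
  rw [zC69, zC69, iheight, iheight, div_lt_div_iff₀ t236 t036] at z2
  have key2 : (dperp (w 0) (w 3) * h 6 + dperp (w 6) (w 0) * h 3 + dperp (w 3) (w 6) * h 0) * tdet (w 2) (w 3) (w 6) - (dperp (w 2) (w 3) * h 6 + dperp (w 6) (w 2) * h 3 + dperp (w 3) (w 6) * h 2) * tdet (w 0) (w 3) (w 6) = dperp (w 3) (w 6) * (-(det4 (w 0) (w 2) (w 3) (w 6) (h 0) (h 2) (h 3) (h 6))) := by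
    simp only [dperp, tdet, det4]; ring
  have hp2 : 0 < dperp (w 3) (w 6) * (-(det4 (w 0) (w 2) (w 3) (w 6) (h 0) (h 2) (h 3) (h 6))) := key2 ▸ sub_pos.mpr z2
  have D0236s : det4 (w 0) (w 2) (w 3) (w 6) (h 0) (h 2) (h 3) (h 6) < 0 := neg_pos.mp (pos_of_mul_pos_nonneg hp2 dge36)
  rw [zC69, zC69, iheight, iheight, div_lt_div_iff₀ t036 t016] at z3
  have key3 : (dperp (w 0) (w 1) * h 6 + dperp (w 6) (w 0) * h 1 + dperp (w 1) (w 6) * h 0) * tdet (w 0) (w 3) (w 6) - (dperp (w 0) (w 3) * h 6 + dperp (w 6) (w 0) * h 3 + dperp (w 3) (w 6) * h 0) * tdet (w 0) (w 1) (w 6) = dperp (w 6) (w 0) * ((det4 (w 0) (w 1) (w 3) (w 6) (h 0) (h 1) (h 3) (h 6))) := by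
    simp only [dperp, tdet, det4]; ring
  have hp3 : 0 < dperp (w 6) (w 0) * ((det4 (w 0) (w 1) (w 3) (w 6) (h 0) (h 1) (h 3) (h 6))) := key3 ▸ sub_pos.mpr z3
  have D0136s : 0 < det4 (w 0) (w 1) (w 3) (w 6) (h 0) (h 1) (h 3) (h 6) := pos_of_mul_pos_nonneg hp3 dge60
  rw [zC69, zC69, iheight, iheight, div_lt_div_iff₀ t016 t056] at z4
  have key4 : (dperp (w 0) (w 5) * h 6 + dperp (w 6) (w 0) * h 5 + dperp (w 5) (w 6) * h 0) * tdet (w 0) (w 1) (w 6) - (dperp (w 0) (w 1) * h 6 + dperp (w 6) (w 0) * h 1 + dperp (w 1) (w 6) * h 0) * tdet (w 0) (w 5) (w 6) = dperp (w 6) (w 0) * (-(det4 (w 0) (w 1) (w 5) (w 6) (h 0) (h 1) (h 5) (h 6))) := by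
    simp only [dperp, tdet, det4]; ring
  have hp4 : 0 < dperp (w 6) (w 0) * (-(det4 (w 0) (w 1) (w 5) (w 6) (h 0) (h 1) (h 5) (h 6))) := key4 ▸ sub_pos.mpr z4
  have D0156s : det4 (w 0) (w 1) (w 5) (w 6) (h 0) (h 1) (h 5) (h 6) < 0 := neg_pos.mp (pos_of_mul_pos_nonneg hp4 dge60)
  rw [zC69, zC69, iheight, iheight, div_lt_div_iff₀ t056 t256] at z5
  have key5 : (dperp (w 2) (w 5) * h 6 + dperp (w 6) (w 2) * h 5 + dperp (w 5) (w 6) * h 2) * tdet (w 0) (w 5) (w 6) - (dperp (w 0) (w 5) * h 6 + dperp (w 6) (w 0) * h 5 + dperp (w 5) (w 6) * h 0) * tdet (w 2) (w 5) (w 6) = dperp (w 5) (w 6) * ((det4 (w 0) (w 2) (w 5) (w 6) (h 0) (h 2) (h 5) (h 6))) := by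
    simp only [dperp, tdet, det4]; ring
  have hp5 : 0 < dperp (w 5) (w 6) * ((det4 (w 0) (w 2) (w 5) (w 6) (h 0) (h 2) (h 5) (h 6))) := key5 ▸ sub_pos.mpr z5
  have D0256s : 0 < det4 (w 0) (w 2) (w 5) (w 6) (h 0) (h 2) (h 5) (h 6) := pos_of_mul_pos_nonneg hp5 dge56
  rw [zC69, zC69, iheight, iheight, div_lt_div_iff₀ t567 t367] at z7
  have key7 : (dperp (w 3) (w 6) * h 7 + dperp (w 7) (w 3) * h 6 + dperp (w 6) (w 7) * h 3) * tdet (w 5) (w 6) (w 7) - (dperp (w 5) (w 6) * h 7 + dperp (w 7) (w 5) * h 6 + dperp (w 6) (w 7) * h 5) * tdet (w 3) (w 6) (w 7) = dperp (w 6) (w 7) * (-(det4 (w 3) (w 5) (w 6) (w 7) (h 3) (h 5) (h 6) (h 7))) := by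
    simp only [dperp, tdet, det4]; ring
  have hp7 : 0 < dperp (w 6) (w 7) * (-(det4 (w 3) (w 5) (w 6) (w 7) (h 3) (h 5) (h 6) (h 7))) := key7 ▸ sub_pos.mpr z7
  have D3567s : det4 (w 3) (w 5) (w 6) (w 7) (h 3) (h 5) (h 6) (h 7) < 0 := neg_pos.mp (pos_of_mul_pos_nonneg hp7 dge67)
  rw [zC69, zC69, iheight, iheight, div_lt_div_iff₀ t367 t167] at z8
  have key8 : (dperp (w 1) (w 6) * h 7 + dperp (w 7) (w 1) * h 6 + dperp (w 6) (w 7) * h 1) * tdet (w 3) (w 6) (w 7) - (dperp (w 3) (w 6) * h 7 + dperp (w 7) (w 3) * h 6 + dperp (w 6) (w 7) * h 3) * tdet (w 1) (w 6) (w 7) = dperp (w 6) (w 7) * (-(det4 (w 1) (w 3) (w 6) (w 7) (h 1) (h 3) (h 6) (h 7))) := by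
    simp only [dperp, tdet, det4]; ring
  have hp8 : 0 < dperp (w 6) (w 7) * (-(det4 (w 1) (w 3) (w 6) (w 7) (h 1) (h 3) (h 6) (h 7))) := key8 ▸ sub_pos.mpr z8
  have D1367s : det4 (w 1) (w 3) (w 6) (w 7) (h 1) (h 3) (h 6) (h 7) < 0 := neg_pos.mp (pos_of_mul_pos_nonneg hp8 dge67)
  rw [zC69, zC69, iheight, iheight, div_lt_div_iff₀ t167 t678] at z9
  have key9 : (dperp (w 6) (w 7) * h 8 + dperp (w 8) (w 6) * h 7 + dperp (w 7) (w 8) * h 6) * tdet (w 1) (w 6) (w 7) - (dperp (w 1) (w 6) * h 7 + dperp (w 7) (w 1) * h 6 + dperp (w 6) (w 7) * h 1) * tdet (w 6) (w 7) (w 8) = dperp (w 6) (w 7) * ((det4 (w 1) (w 6) (w 7) (w 8) (h 1) (h 6) (h 7) (h 8))) := by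
    simp only [dperp, tdet, det4]; ring
  have hp9 : 0 < dperp (w 6) (w 7) * ((det4 (w 1) (w 6) (w 7) (w 8) (h 1) (h 6) (h 7) (h 8))) := key9 ▸ sub_pos.mpr z9
  have D1678s : 0 < det4 (w 1) (w 6) (w 7) (w 8) (h 1) (h 6) (h 7) (h 8) := pos_of_mul_pos_nonneg hp9 dge67
  rw [zC69, zC69, iheight, iheight, div_lt_div_iff₀ t678 t278] at z10
  have key10 : (dperp (w 2) (w 7) * h 8 + dperp (w 8) (w 2) * h 7 + dperp (w 7) (w 8) * h 2) * tdet (w 6) (w 7) (w 8) - (dperp (w 6) (w 7) * h 8 + dperp (w 8) (w 6) * h 7 + dperp (w 7) (w 8) * h 6) * tdet (w 2) (w 7) (w 8) = dperp (w 7) (w 8) * (-(det4 (w 2) (w 6) (w 7) (w 8) (h 2) (h 6) (h 7) (h 8))) := by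
    simp only [dperp, tdet, det4]; ring
  have hp10 : 0 < dperp (w 7) (w 8) * (-(det4 (w 2) (w 6) (w 7) (w 8) (h 2) (h 6) (h 7) (h 8))) := key10 ▸ sub_pos.mpr z10
  have D2678s : det4 (w 2) (w 6) (w 7) (w 8) (h 2) (h 6) (h 7) (h 8) < 0 := neg_pos.mp (pos_of_mul_pos_nonneg hp10 dge78)
  rw [zC69, zC69, iheight, iheight, div_lt_div_iff₀ t012 t125] at z17
  have key17 : (dperp (w 1) (w 2) * h 5 + dperp (w 5) (w 1) * h 2 + dperp (w 2) (w 5) * h 1) * tdet (w 0) (w 1) (w 2) - (dperp (w 0) (w 1) * h 2 + dperp (w 2) (w 0) * h 1 + dperp (w 1) (w 2) * h 0) * tdet (w 1) (w 2) (w 5) = dperp (w 1) (w 2) * ((det4 (w 0) (w 1) (w 2) (w 5) (h 0) (h 1) (h 2) (h 5))) := by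
    simp only [dperp, tdet, det4]; ring
  have hp17 : 0 < dperp (w 1) (w 2) * ((det4 (w 0) (w 1) (w 2) (w 5) (h 0) (h 1) (h 2) (h 5))) := key17 ▸ sub_pos.mpr z17
  have D0125s : 0 < det4 (w 0) (w 1) (w 2) (w 5) (h 0) (h 1) (h 2) (h 5) := pos_of_mul_pos_nonneg hp17 dge12
  rw [zC69, zC69, iheight, iheight, div_lt_div_iff₀ t125 t258] at z18
  have key18 : (dperp (w 2) (w 5) * h 8 + dperp (w 8) (w 2) * h 5 + dperp (w 5) (w 8) * h 2) * tdet (w 1) (w 2) (w 5) - (dperp (w 1) (w 2) * h 5 + dperp (w 5) (w 1) * h 2 + dperp (w 2) (w 5) * h 1) * tdet (w 2) (w 5) (w 8) = dperp (w 2) (w 5) * ((det4 (w 1) (w 2) (w 5) (w 8) (h 1) (h 2) (h 5) (h 8))) := by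
    simp only [dperp, tdet, det4]; ring
  have hp18 : 0 < dperp (w 2) (w 5) * ((det4 (w 1) (w 2) (w 5) (w 8) (h 1) (h 2) (h 5) (h 8))) := key18 ▸ sub_pos.mpr z18
  have D1258s : 0 < det4 (w 1) (w 2) (w 5) (w 8) (h 1) (h 2) (h 5) (h 8) := pos_of_mul_pos_nonneg hp18 dge25
  rw [zC69, zC69, iheight, iheight, div_lt_div_iff₀ t258 t058] at z19
  have key19 : (dperp (w 0) (w 5) * h 8 + dperp (w 8) (w 0) * h 5 + dperp (w 5) (w 8) * h 0) * tdet (w 2) (w 5) (w 8) - (dperp (w 2) (w 5) * h 8 + dperp (w 8) (w 2) * h 5 + dperp (w 5) (w 8) * h 2) * tdet (w 0) (w 5) (w 8) = dperp (w 5) (w 8) * (-(det4 (w 0) (w 2) (w 5) (w 8) (h 0) (h 2) (h 5) (h 8))) := by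
    simp only [dperp, tdet, det4]; ring
  have hp19 : 0 < dperp (w 5) (w 8) * (-(det4 (w 0) (w 2) (w 5) (w 8) (h 0) (h 2) (h 5) (h 8))) := key19 ▸ sub_pos.mpr z19
  have D0258s : det4 (w 0) (w 2) (w 5) (w 8) (h 0) (h 2) (h 5) (h 8) < 0 := neg_pos.mp (pos_of_mul_pos_nonneg hp19 dge58)
  rw [zC69, zC69, iheight, iheight, div_lt_div_iff₀ t058 t458] at z20
  have key20 : (dperp (w 4) (w 5) * h 8 + dperp (w 8) (w 4) * h 5 + dperp (w 5) (w 8) * h 4) * tdet (w 0) (w 5) (w 8) - (dperp (w 0) (w 5) * h 8 + dperp (w 8) (w 0) * h 5 + dperp (w 5) (w 8) * h 0) * tdet (w 4) (w 5) (w 8) = dperp (w 5) (w 8) * ((det4 (w 0) (w 4) (w 5) (w 8) (h 0) (h 4) (h 5) (h 8))) := by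
    simp only [dperp, tdet, det4]; ring
  have hp20 : 0 < dperp (w 5) (w 8) * ((det4 (w 0) (w 4) (w 5) (w 8) (h 0) (h 4) (h 5) (h 8))) := key20 ▸ sub_pos.mpr z20
  have D0458s : 0 < det4 (w 0) (w 4) (w 5) (w 8) (h 0) (h 4) (h 5) (h 8) := pos_of_mul_pos_nonneg hp20 dge58
  rw [zC69, zC69, iheight, iheight, div_lt_div_iff₀ t458 t456] at z21
  have key21 : (dperp (w 4) (w 5) * h 6 + dperp (w 6) (w 4) * h 5 + dperp (w 5) (w 6) * h 4) * tdet (w 4) (w 5) (w 8) - (dperp (w 4) (w 5) * h 8 + dperp (w 8) (w 4) * h 5 + dperp (w 5) (w 8) * h 4) * tdet (w 4) (w 5) (w 6) = dperp (w 4) (w 5) * (-(det4 (w 4) (w 5) (w 6) (w 8) (h 4) (h 5) (h 6) (h 8))) := by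
    simp only [dperp, tdet, det4]; ring
  have hp21 : 0 < dperp (w 4) (w 5) * (-(det4 (w 4) (w 5) (w 6) (w 8) (h 4) (h 5) (h 6) (h 8))) := key21 ▸ sub_pos.mpr z21
  have D4568s : det4 (w 4) (w 5) (w 6) (w 8) (h 4) (h 5) (h 6) (h 8) < 0 := neg_pos.mp (pos_of_mul_pos_nonneg hp21 dge45)
  -- sign propagation through three-term Grassmann–Plücker relations
  have gp1 : (1) * (tdet (w 0) (w 2) (w 5)) * (det4 (w 1) (w 2) (w 5) (w 8) (h 1) (h 2) (h 5) (h 8)) + (-1) * (tdet (w 1) (w 2) (w 5)) * (det4 (w 0) (w 2) (w 5) (w 8) (h 0) (h 2) (h 5) (h 8)) + (1) * (tdet (w 2) (w 5) (w 8)) * (det4 (w 0) (w 1) (w 2) (w 5) (h 0) (h 1) (h 2) (h 5)) = 0 := by simp only [dperp, tdet, det4]; ring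
  have t025s : tdet (w 0) (w 2) (w 5) < 0 := by nlinarith only [gp1, mul_pos t125 (neg_pos.mpr D0258s), mul_pos t258 D0125s, D1258s]
  have gp2 : (1) * (tdet (w 0) (w 1) (w 6)) * (det4 (w 0) (w 3) (w 5) (w 6) (h 0) (h 3) (h 5) (h 6)) + (-1) * (tdet (w 0) (w 3) (w 6)) * (det4 (w 0) (w 1) (w 5) (w 6) (h 0) (h 1) (h 5) (h 6)) + (1) * (tdet (w 0) (w 5) (w 6)) * (det4 (w 0) (w 1) (w 3) (w 6) (h 0) (h 1) (h 3) (h 6)) = 0 := by simp only [dperp, tdet, det4]; ring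
  have D0356s : det4 (w 0) (w 3) (w 5) (w 6) (h 0) (h 3) (h 5) (h 6) < 0 := by nlinarith only [gp2, mul_pos t036 (neg_pos.mpr D0156s), mul_pos t056 D0136s, t016]
  have gp3 : (1) * (tdet (w 0) (w 2) (w 6)) * (det4 (w 0) (w 3) (w 5) (w 6) (h 0) (h 3) (h 5) (h 6)) + (-1) * (tdet (w 0) (w 3) (w 6)) * (det4 (w 0) (w 2) (w 5) (w 6) (h 0) (h 2) (h 5) (h 6)) + (1) * (tdet (w 0) (w 5) (w 6)) * (det4 (w 0) (w 2) (w 3) (w 6) (h 0) (h 2) (h 3) (h 6)) = 0 := by simp only [dperp, tdet, det4]; ring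
  have t026s : tdet (w 0) (w 2) (w 6) < 0 := by nlinarith only [gp3, mul_pos t036 D0256s, mul_pos t056 (neg_pos.mpr D0236s), D0356s]
  have gp4 : (1) * (tdet (w 0) (w 2) (w 6)) * (det4 (w 2) (w 3) (w 5) (w 6) (h 2) (h 3) (h 5) (h 6)) + (-1) * (tdet (w 2) (w 3) (w 6)) * (det4 (w 0) (w 2) (w 5) (w 6) (h 0) (h 2) (h 5) (h 6)) + (1) * (tdet (w 2) (w 5) (w 6)) * (det4 (w 0) (w 2) (w 3) (w 6) (h 0) (h 2) (h 3) (h 6)) = 0 := by simp only [dperp, tdet, det4]; ring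
  have D2356s : det4 (w 2) (w 3) (w 5) (w 6) (h 2) (h 3) (h 5) (h 6) < 0 := by nlinarith only [gp4, mul_pos t236 D0256s, mul_pos t256 (neg_pos.mpr D0236s), t026s]
  have gp5 : (1) * (tdet (w 0) (w 2) (w 5)) * (det4 (w 0) (w 5) (w 6) (w 8) (h 0) (h 5) (h 6) (h 8)) + (-1) * (tdet (w 0) (w 5) (w 6)) * (det4 (w 0) (w 2) (w 5) (w 8) (h 0) (h 2) (h 5) (h 8)) + (1) * (tdet (w 0) (w 5) (w 8)) * (det4 (w 0) (w 2) (w 5) (w 6) (h 0) (h 2) (h 5) (h 6)) = 0 := by simp only [dperp, tdet, det4]; ring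
  have D0568s : 0 < det4 (w 0) (w 5) (w 6) (w 8) (h 0) (h 5) (h 6) (h 8) := by nlinarith only [gp5, mul_pos t056 (neg_pos.mpr D0258s), mul_pos t058 D0256s, t025s]
  have gp6 : (1) * (tdet (w 0) (w 2) (w 5)) * (det4 (w 2) (w 5) (w 6) (w 8) (h 2) (h 5) (h 6) (h 8)) + (-1) * (tdet (w 2) (w 5) (w 6)) * (det4 (w 0) (w 2) (w 5) (w 8) (h 0) (h 2) (h 5) (h 8)) + (1) * (tdet (w 2) (w 5) (w 8)) * (det4 (w 0) (w 2) (w 5) (w 6) (h 0) (h 2) (h 5) (h 6)) = 0 := by simp only [dperp, tdet, det4]; ring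
  have D2568s : 0 < det4 (w 2) (w 5) (w 6) (w 8) (h 2) (h 5) (h 6) (h 8) := by nlinarith only [gp6, mul_pos t256 (neg_pos.mpr D0258s), mul_pos t258 D0256s, t025s]
  have gp7 : (1) * (tdet (w 0) (w 5) (w 8)) * (det4 (w 4) (w 5) (w 6) (w 8) (h 4) (h 5) (h 6) (h 8)) + (-1) * (tdet (w 4) (w 5) (w 8)) * (det4 (w 0) (w 5) (w 6) (w 8) (h 0) (h 5) (h 6) (h 8)) + (1) * (tdet (w 5) (w 6) (w 8)) * (det4 (w 0) (w 4) (w 5) (w 8) (h 0) (h 4) (h 5) (h 8)) = 0 := by simp only [dperp, tdet, det4]; ring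
  have t568s : 0 < tdet (w 5) (w 6) (w 8) := by nlinarith only [gp7, mul_pos t058 (neg_pos.mpr D4568s), mul_pos t458 D0568s, D0458s]
  have gp8 : (1) * (tdet (w 1) (w 6) (w 7)) * (det4 (w 3) (w 5) (w 6) (w 7) (h 3) (h 5) (h 6) (h 7)) + (-1) * (tdet (w 3) (w 6) (w 7)) * (det4 (w 1) (w 5) (w 6) (w 7) (h 1) (h 5) (h 6) (h 7)) + (1) * (tdet (w 5) (w 6) (w 7)) * (det4 (w 1) (w 3) (w 6) (w 7) (h 1) (h 3) (h 6) (h 7)) = 0 := by simp only [dperp, tdet, det4]; ring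
  have D1567s : det4 (w 1) (w 5) (w 6) (w 7) (h 1) (h 5) (h 6) (h 7) < 0 := by nlinarith only [gp8, mul_pos t167 (neg_pos.mpr D3567s), mul_pos t567 (neg_pos.mpr D1367s), t367]
  have gp9 : (1) * (tdet (w 1) (w 6) (w 7)) * (det4 (w 5) (w 6) (w 7) (w 8) (h 5) (h 6) (h 7) (h 8)) + (-1) * (tdet (w 5) (w 6) (w 7)) * (det4 (w 1) (w 6) (w 7) (w 8) (h 1) (h 6) (h 7) (h 8)) + (1) * (tdet (w 6) (w 7) (w 8)) * (det4 (w 1) (w 5) (w 6) (w 7) (h 1) (h 5) (h 6) (h 7)) = 0 := by simp only [dperp, tdet, det4]; ring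
  have D5678s : 0 < det4 (w 5) (w 6) (w 7) (w 8) (h 5) (h 6) (h 7) (h 8) := by nlinarith only [gp9, mul_pos t567 D1678s, mul_pos t678 (neg_pos.mpr D1567s), t167]
  have gp10 : (1) * (tdet (w 2) (w 3) (w 6)) * (det4 (w 2) (w 5) (w 6) (w 8) (h 2) (h 5) (h 6) (h 8)) + (-1) * (tdet (w 2) (w 5) (w 6)) * (det4 (w 2) (w 3) (w 6) (w 8) (h 2) (h 3) (h 6) (h 8)) + (1) * (tdet (w 2) (w 6) (w 8)) * (det4 (w 2) (w 3) (w 5) (w 6) (h 2) (h 3) (h 5) (h 6)) = 0 := by simp only [dperp, tdet, det4]; ring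
  have t268s : 0 < tdet (w 2) (w 6) (w 8) := by nlinarith only [gp10, mul_pos t236 D2568s, mul_pos t256 (neg_pos.mpr D2368s), D2356s]
  have gpF : (1) * (tdet (w 2) (w 6) (w 8)) * (det4 (w 5) (w 6) (w 7) (w 8) (h 5) (h 6) (h 7) (h 8)) + (-1) * (tdet (w 5) (w 6) (w 8)) * (det4 (w 2) (w 6) (w 7) (w 8) (h 2) (h 6) (h 7) (h 8)) + (1) * (tdet (w 6) (w 7) (w 8)) * (det4 (w 2) (w 5) (w 6) (w 8) (h 2) (h 5) (h 6) (h 8)) = 0 := by simp only [dperp, tdet, det4]; ring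
  nlinarith only [gpF, mul_pos t268s D5678s, mul_pos t568s (neg_pos.mpr D2678s), mul_pos t678 D2568s]
end
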